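/- arXiv:1806.07262 — 6 statements merged into one kernel-verified Lean document; each statement's English description precedes it below -/
import Mathlib

section
/- Let φmin(δ) denote, for δ > 0, the unique solution in (0, π/3) of 1 + δ + F(φ) = 0. For every δ > 0 such a solution exists and is unique, 1 + δ + F(φ) > 0 for all φ ∈ (φmin(δ), π], and there exist constants C > 0 and δ₀ ∈ (0,1) such that for all δ ∈ (0, δ₀) the integral I(δ) = ∫_{φmin(δ)}^{π} (1 + δ + F(φ))^{-1/2} dφ satisfies |I(δ) − √(6/7)·ln(1/δ)| ≤ C. (This is the asymptotic expansion of the rescaled period of the horseshoe orbit of energy shift δ: the semi-fast frequency satisfies ν_δ = 2π/T_δ with T_δ = (2/(υ₀√(εAB)))·I(δ), hence ν_δ ∼ υ₀√ε·K/|ln δ| with K = √(7π²AB/6).) -/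
/-!
`F` increases on `(0, π/3]` from `-∞` to `-1/3` and `1 + F ≥ 0` on `[π/3, π]`, which gives the
root `φmin(δ)` and the sign of `1 + δ + F` beyond it. For the integral, split `[φmin, π]` at `π/4`
and `π/2`. For small `δ` the root lies in `[1/4, π/4)`, where the slope of `F` is bounded below, so
`1 + δ + F φ ≥ m (φ - φmin)` and the first piece is `O(1)`; on `[π/4, π/2]` the integrand is
bounded. At `π` the potential has a nondegenerate minimum: writing the chord at `π - s` as
`2 cos (s/2)` gives `1 + F (π - s) = 7 s²/24 + O(s⁴)`, so the last piece is within `O(1)` of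
`∫₀^{π/2} (δ + 7 s²/24)^{-1/2} ds = √(24/7) arsinh (√(7/(24 δ)) π/2) = √(6/7) log (1/δ) + O(1)`.
-/

open Real MeasureTheory

/-- The normalized potential of the reduced semi-fast co-orbital mechanical system. -/
noncomputable def F (φ : ℝ) : ℝ :=
  (2/3) * (Real.cos φ - (2 - 2 * Real.cos φ) ^ (-(1:ℝ)/2))

open Set

namespace Horseshoe

lemma two_sub_two_cos_pos {φ : ℝ} (h0 : 0 < φ) (hπ : φ ≤ π) : 0 < 2 - 2 * cos φ := by
  have := strictAntiOn_cos (left_mem_Icc.mpr pi_pos.le) ⟨h0.le, hπ⟩ h0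
  rw [cos_zero] at this
  linarith

lemma rpow_neg_half_eq_inv_sqrt {x : ℝ} (hx : 0 ≤ x) : x ^ (-(1:ℝ)/2) = (√x)⁻¹ := by
  rw [sqrt_eq_rpow, ← rpow_neg hx]
  norm_num

lemma one_add_F_eq {φ : ℝ} (h : 0 < 2 - 2 * cos φ) :
    1 + F φ = (2 - √(2 - 2 * cos φ)) * (√(2 - 2 * cos φ) ^ 2 + 2 * √(2 - 2 * cos φ) - 1) /
      (3 * √(2 - 2 * cos φ)) := by
  rw [F, rpow_neg_half_eq_inv_sqrt h.le]
  set v := √(2 - 2 * cos φ)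
  have hv0 : 0 < v := sqrt_pos.mpr h
  have hcos : cos φ = 1 - v ^ 2 / 2 := by linarith [sq_sqrt h.le]
  rw [hcos]
  field_simp
  ring

lemma F_pi_div_three : F (π / 3) = -(1 / 3) := by
  rw [F, cos_pi_div_three]
  norm_num

lemma F_le {φ : ℝ} (h0 : 0 < φ) (hπ : φ ≤ π) : F φ ≤ (2 / 3) * (1 - 1 / φ) := by
  have hb := two_sub_two_cos_pos h0 hπ
  have hchord : √(2 - 2 * cos φ) ≤ φ := by
    rw [sqrt_le_left h0.le]
    nlinarith [one_sub_sq_div_two_le_cos (x := φ)]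
  have hinv : 1 / φ ≤ (√(2 - 2 * cos φ))⁻¹ := by
    rw [one_div]
    exact inv_anti₀ (sqrt_pos.mpr hb) hchord
  rw [F, rpow_neg_half_eq_inv_sqrt hb.le]
  nlinarith [cos_le_one φ]

lemma one_add_F_nonneg {φ : ℝ} (h1 : π / 3 ≤ φ) (hπ : φ ≤ π) : 0 ≤ 1 + F φ := by
  have h0 : 0 < φ := lt_of_lt_of_le (by positivity) h1
  have hb := two_sub_two_cos_pos h0 hπ
  have hcos : cos φ ≤ 1 / 2 := by
    rw [← cos_pi_div_three]
    exact strictAntiOn_cos.antitoneOn ⟨by positivity, by linarith [pi_pos]⟩ ⟨h0.le, hπ⟩ h1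
  rw [one_add_F_eq hb]
  set v := √(2 - 2 * cos φ)
  have hv2 : v ^ 2 = 2 - 2 * cos φ := sq_sqrt hb.le
  have hv1 : 1 ≤ v := by nlinarith [sqrt_nonneg (2 - 2 * cos φ)]
  have hv4 : v ≤ 2 := by nlinarith [neg_one_le_cos φ]
  have : 0 ≤ (2 - v) * (v ^ 2 + 2 * v - 1) := by nlinarith
  positivity

lemma one_tenth_le_one_add_F {φ : ℝ} (h1 : π / 4 ≤ φ) (h2 : φ ≤ π / 2) : 1 / 10 ≤ 1 + F φ := by
  have h0 : 0 < φ := lt_of_lt_of_le (by positivity) h1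
  have hb := two_sub_two_cos_pos h0 (by linarith [pi_pos])
  have hcos1 : cos φ ≤ √2 / 2 := by
    rw [← cos_pi_div_four]
    exact strictAntiOn_cos.antitoneOn ⟨by positivity, by linarith [pi_pos]⟩
      ⟨h0.le, by linarith [pi_pos]⟩ h1
  have hcos0 : 0 ≤ cos φ := cos_nonneg_of_mem_Icc ⟨by linarith [pi_pos], h2⟩
  have hsqrt2 : √2 < 1.415 := by nlinarith [sq_sqrt (show (0:ℝ) ≤ 2 by norm_num), sqrt_nonneg 2]
  rw [one_add_F_eq hb]
  set v := √(2 - 2 * cos φ)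
  have hv2 : v ^ 2 = 2 - 2 * cos φ := sq_sqrt hb.le
  have hvlow : (0.7:ℝ) < v := by nlinarith [sqrt_nonneg (2 - 2 * cos φ)]
  have hvhigh : v < 1.415 := by nlinarith [sqrt_nonneg (2 - 2 * cos φ)]
  rw [le_div_iff₀ (by positivity)]
  nlinarith

noncomputable def F' (φ : ℝ) : ℝ :=
  (2 / 3) * (sin φ * ((2 - 2 * cos φ) ^ (-(3:ℝ)/2) - 1))

lemma hasDerivAt_F {φ : ℝ} (h : 0 < 2 - 2 * cos φ) : HasDerivAt F (F' φ) φ := by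
  have hbase : HasDerivAt (fun φ => 2 - 2 * cos φ) (2 * sin φ) φ := by
    simpa using ((hasDerivAt_cos φ).const_mul (2:ℝ)).const_sub 2
  have hF := ((hasDerivAt_cos φ).sub
    ((hasDerivAt_rpow_const (p := -(1:ℝ)/2) (Or.inl h.ne')).comp φ hbase)).const_mul (2/3 : ℝ)
  refine hF.congr_deriv ?_
  unfold F'
  rw [show (-(3:ℝ)/2) = -(1:ℝ)/2 - 1 by norm_num]
  ring

lemma continuousAt_F {φ : ℝ} (h : 0 < 2 - 2 * cos φ) : ContinuousAt F φ :=
  (hasDerivAt_F h).continuousAt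

lemma continuousAt_F' {φ : ℝ} (h : 0 < 2 - 2 * cos φ) : ContinuousAt F' φ := by
  have hc : ContinuousAt (fun φ => 2 - 2 * cos φ) φ := by fun_prop
  unfold F'
  exact continuousAt_const.mul (continuous_sin.continuousAt.mul
    ((hc.rpow_const (Or.inl h.ne')).sub continuousAt_const))

lemma F'_pos {φ : ℝ} (h0 : 0 < φ) (h1 : φ < π / 3) : 0 < F' φ := by
  have hπ : φ < π := lt_trans h1 (by linarith [pi_pos])
  have hsin : 0 < sin φ := sin_pos_of_pos_of_lt_pi h0 hπ
  have hcos : cos (π / 3) < cos φ :=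
    strictAntiOn_cos ⟨h0.le, hπ.le⟩ ⟨by positivity, by linarith [pi_pos]⟩ h1
  rw [cos_pi_div_three] at hcos
  have hb := two_sub_two_cos_pos h0 hπ.le
  have : 1 < (2 - 2 * cos φ) ^ (-(3:ℝ)/2) :=
    (one_lt_rpow_iff_of_pos hb).mpr (Or.inr ⟨by linarith, by norm_num⟩)
  unfold F'
  nlinarith

lemma strictMonoOn_F : StrictMonoOn F (Ioc 0 (π / 3)) := by
  have hb : ∀ x ∈ Ioc (0:ℝ) (π / 3), 0 < 2 - 2 * cos x := fun x hx =>
    two_sub_two_cos_pos hx.1 (hx.2.trans (by linarith [pi_pos]))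
  apply strictMonoOn_of_deriv_pos (convex_Ioc _ _)
    (fun x hx => (continuousAt_F (hb x hx)).continuousWithinAt)
  rw [interior_Ioc]
  intro x hx
  rw [(hasDerivAt_F (hb x (Ioo_subset_Ioc_self hx))).deriv]
  exact F'_pos hx.1 hx.2

/-- The lower bound on the root comes from `F φ ≤ (2/3)(1 - 1/φ)`. -/
lemma exists_root (δ : ℝ) (hδ : 0 < δ) :
    ∃ c ∈ Ico (2 / (5 + 3 * δ)) (π / 3), 1 + δ + F c = 0 := by
  have hπ := pi_gt_three
  set a : ℝ := 2 / (5 + 3 * δ)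
  have ha0 : 0 < a := by positivity
  have ha : a ≤ 2 / 5 := div_le_div_of_nonneg_left (by norm_num) (by norm_num) (by linarith)
  have hFa : F a ≤ -(1 + δ) := by
    have := F_le ha0 (by linarith)
    rw [one_div_div] at this
    linarith
  have hcont : ContinuousOn F (Icc a (π / 3)) := fun x hx =>
    (continuousAt_F (two_sub_two_cos_pos (ha0.trans_le hx.1)
      (hx.2.trans (by linarith)))).continuousWithinAt
  obtain ⟨c, hc, hFc⟩ := intermediate_value_Icc (by linarith) hcont
    ⟨hFa, by rw [F_pi_div_three]; linarith⟩
  refine ⟨c, ⟨hc.1, lt_of_le_of_ne hc.2 ?_⟩, by linarith⟩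
  rintro rfl
  rw [F_pi_div_three] at hFc
  linarith

/-- The paper's `φmin(δ)`, with the junk value `0` for `δ ≤ 0`. -/
noncomputable def phiMin (δ : ℝ) : ℝ :=
  if h : 0 < δ then (exists_root δ h).choose else 0

section phiMin

variable {δ : ℝ}

lemma phiMin_mem (hδ : 0 < δ) : phiMin δ ∈ Ico (2 / (5 + 3 * δ)) (π / 3) := by
  rw [phiMin, dif_pos hδ]
  exact (exists_root δ hδ).choose_spec.1

lemma phiMin_pos (hδ : 0 < δ) : 0 < phiMin δ :=
  lt_of_lt_of_le (by positivity) (phiMin_mem hδ).1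

lemma one_add_add_F_phiMin (hδ : 0 < δ) : 1 + δ + F (phiMin δ) = 0 := by
  rw [phiMin, dif_pos hδ]
  exact (exists_root δ hδ).choose_spec.2

lemma eq_phiMin_of_root (hδ : 0 < δ) {φ : ℝ} (hφ : φ ∈ Ioo 0 (π / 3)) (h : 1 + δ + F φ = 0) :
    φ = phiMin δ :=
  strictMonoOn_F.injOn (Ioo_subset_Ioc_self hφ) ⟨phiMin_pos hδ, (phiMin_mem hδ).2.le⟩
    (by linarith [one_add_add_F_phiMin hδ])

lemma one_add_add_F_pos (hδ : 0 < δ) {φ : ℝ} (hφ : φ ∈ Ioc (phiMin δ) π) : 0 < 1 + δ + F φ := by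
  rcases le_or_gt φ (π / 3) with h | h
  · have := strictMonoOn_F ⟨phiMin_pos hδ, (phiMin_mem hδ).2.le⟩
      ⟨(phiMin_pos hδ).trans hφ.1, h⟩ hφ.1
    linarith [one_add_add_F_phiMin hδ]
  · linarith [one_add_F_nonneg h.le hφ.2]

lemma phiMin_mem_Ico_pi_div_four (hδ : 0 < δ) (hδ1 : δ ≤ 1) : phiMin δ ∈ Ico (1 / 4) (π / 4) := by
  obtain ⟨hlow, hup⟩ := phiMin_mem hδ
  refine ⟨le_trans ?_ hlow, ?_⟩
  · rw [le_div_iff₀ (by linarith)]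
    linarith
  · by_contra! hge
    have hmono : F (π / 4) ≤ F (phiMin δ) :=
      strictMonoOn_F.monotoneOn ⟨by positivity, by linarith [pi_pos]⟩
        ⟨phiMin_pos hδ, hup.le⟩ hge
    have := one_tenth_le_one_add_F le_rfl (by linarith [pi_pos])
    linarith [one_add_add_F_phiMin hδ]

end phiMin

lemma exists_mul_sub_le_F_sub : ∃ m > 0, ∀ c ∈ Icc (1 / 4 : ℝ) (π / 4),
    ∀ φ ∈ Icc (1 / 4 : ℝ) (π / 4), c ≤ φ → m * (φ - c) ≤ F φ - F c := by
  have hb : ∀ x ∈ Icc (1 / 4 : ℝ) (π / 4), 0 < 2 - 2 * cos x := fun x hx =>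
    two_sub_two_cos_pos (lt_of_lt_of_le (by norm_num) hx.1) (hx.2.trans (by linarith [pi_pos]))
  obtain ⟨x₀, hx₀, hmin⟩ := isCompact_Icc.exists_isMinOn
    (nonempty_Icc.mpr (by linarith [pi_gt_three])) fun x hx =>
      (continuousAt_F' (hb x hx)).continuousWithinAt
  refine ⟨F' x₀, F'_pos (lt_of_lt_of_le (by norm_num) hx₀.1)
    (hx₀.2.trans_lt (by linarith [pi_pos])), ?_⟩
  refine (convex_Icc _ _).mul_sub_le_image_sub_of_le_deriv
    (fun x hx => (continuousAt_F (hb x hx)).continuousWithinAt) ?_ ?_ <;>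
    rw [interior_Icc]
  · exact fun x hx => (hasDerivAt_F (hb x (Ioo_subset_Icc_self hx))).differentiableAt
      |>.differentiableWithinAt
  · intro x hx
    rw [(hasDerivAt_F (hb x (Ioo_subset_Icc_self hx))).deriv]
    exact hmin (Ioo_subset_Icc_self hx)

lemma continuousOn_F : ContinuousOn F (Ioc 0 π) := fun _ hx =>
  (continuousAt_F (two_sub_two_cos_pos hx.1 hx.2)).continuousWithinAt

lemma continuousOn_integrand (δ : ℝ) {s : Set ℝ} (hs : s ⊆ Ioc 0 π)
    (hpos : ∀ φ ∈ s, 0 < 1 + δ + F φ) :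
    ContinuousOn (fun φ => (1 + δ + F φ) ^ (-(1:ℝ)/2)) s :=
  (continuousOn_const.add (continuousOn_F.mono hs)).rpow_const fun x hx => Or.inl (hpos x hx).ne'

lemma intervalIntegrable_rpow_neg_half_and_abs_integral_le {f : ℝ → ℝ} {c d m : ℝ}
    (hcd : c ≤ d) (hm : 0 < m) (hf : ContinuousOn f (Ioc c d))
    (hlow : ∀ x ∈ Ioc c d, m * (x - c) ≤ f x) :
    IntervalIntegrable (fun x => f x ^ (-(1:ℝ)/2)) volume c d ∧
      |∫ x in c..d, f x ^ (-(1:ℝ)/2)| ≤ m ^ (-(1:ℝ)/2) * (2 * (d - c) ^ ((1:ℝ)/2)) := by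
  set g : ℝ → ℝ := fun x => m ^ (-(1:ℝ)/2) * (x - c) ^ (-(1:ℝ)/2)
  have hg : IntervalIntegrable g volume c d := by
    have := ((intervalIntegral.intervalIntegrable_rpow' (r := -(1:ℝ)/2) (by norm_num)
      (a := 0) (b := d - c)).comp_sub_right c).const_mul (m ^ (-(1:ℝ)/2))
    rwa [zero_add, sub_add_cancel] at this
  have hfpos : ∀ x ∈ Ioc c d, 0 < f x := fun x hx =>
    (mul_pos hm (sub_pos.mpr hx.1)).trans_le (hlow x hx)
  have hdom : ∀ x ∈ Ioc c d, ‖f x ^ (-(1:ℝ)/2)‖ ≤ g x := by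
    intro x hx
    have hmx : 0 < m * (x - c) := mul_pos hm (sub_pos.mpr hx.1)
    rw [norm_of_nonneg (rpow_nonneg (hfpos x hx).le _)]
    change _ ≤ m ^ (-(1:ℝ)/2) * (x - c) ^ (-(1:ℝ)/2)
    rw [← mul_rpow hm.le (sub_pos.mpr hx.1).le]
    exact rpow_le_rpow_of_nonpos hmx (hlow x hx) (by norm_num)
  have hint : IntervalIntegrable (fun x => f x ^ (-(1:ℝ)/2)) volume c d := by
    refine hg.mono_fun' ?_ ?_ <;> rw [uIoc_of_le hcd]
    · exact (hf.rpow_const fun x hx => Or.inl (hfpos x hx).ne').aestronglyMeasurable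
        measurableSet_Ioc
    · exact (ae_restrict_iff' measurableSet_Ioc).mpr (ae_of_all _ hdom)
  refine ⟨hint, ?_⟩
  have hle := intervalIntegral.norm_integral_le_of_norm_le hcd (ae_of_all _ hdom) hg
  have hg_eq : ∫ x in c..d, g x = m ^ (-(1:ℝ)/2) * (2 * (d - c) ^ ((1:ℝ)/2)) := by
    rw [intervalIntegral.integral_const_mul, intervalIntegral.integral_comp_sub_right
      (fun x => x ^ (-(1:ℝ)/2)), sub_self, integral_rpow (Or.inl (by norm_num)),
      show -(1:ℝ)/2 + 1 = 1/2 by norm_num, zero_rpow (by norm_num)]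
    ring
  rwa [← norm_eq_abs, ← hg_eq]

lemma exists_abs_integral_phiMin_pi_div_four_le : ∃ C, ∀ δ ∈ Ioc (0:ℝ) 1,
    IntervalIntegrable (fun φ => (1 + δ + F φ) ^ (-(1:ℝ)/2)) volume (phiMin δ) (π / 4) ∧
      |∫ φ in (phiMin δ)..(π / 4), (1 + δ + F φ) ^ (-(1:ℝ)/2)| ≤ C := by
  obtain ⟨m, hm, hslope⟩ := exists_mul_sub_le_F_sub
  refine ⟨m ^ (-(1:ℝ)/2) * (2 * (π / 4) ^ ((1:ℝ)/2)), fun δ hδ => ?_⟩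
  obtain ⟨hc, hcπ⟩ := phiMin_mem_Ico_pi_div_four hδ.1 hδ.2
  have hroot := one_add_add_F_phiMin hδ.1
  obtain ⟨hint, hle⟩ := intervalIntegrable_rpow_neg_half_and_abs_integral_le
    (f := fun φ => 1 + δ + F φ) hcπ.le hm (continuousOn_const.add (continuousOn_F.mono fun x hx =>
      ⟨(phiMin_pos hδ.1).trans hx.1, hx.2.trans (by linarith [pi_pos])⟩))
    fun x hx => by
      linarith [hslope _ ⟨hc, hcπ.le⟩ x ⟨hc.trans hx.1.le, hx.2⟩ hx.1.le]
  refine ⟨hint, hle.trans ?_⟩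
  gcongr
  linarith [phiMin_pos hδ.1]

lemma intervalIntegrable_and_abs_integral_pi_div_four_pi_div_two_le {δ : ℝ} (hδ : 0 ≤ δ) :
    IntervalIntegrable (fun φ => (1 + δ + F φ) ^ (-(1:ℝ)/2)) volume (π / 4) (π / 2) ∧
      |∫ φ in (π / 4)..(π / 2), (1 + δ + F φ) ^ (-(1:ℝ)/2)| ≤
        (1 / 10 : ℝ) ^ (-(1:ℝ)/2) * (π / 4) := by
  have hπ := pi_pos
  have hlow : ∀ φ ∈ Icc (π / 4) (π / 2), 1 / 10 ≤ 1 + δ + F φ := fun φ hφ => by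
    linarith [one_tenth_le_one_add_F hφ.1 hφ.2]
  refine ⟨ContinuousOn.intervalIntegrable ?_, ?_⟩
  · rw [uIcc_of_le (by linarith)]
    exact continuousOn_integrand δ (fun φ hφ => ⟨by linarith [hφ.1], by linarith [hφ.2]⟩)
      fun φ hφ => by linarith [hlow φ hφ]
  · have := intervalIntegral.norm_integral_le_of_norm_le_const
      (f := fun φ => (1 + δ + F φ) ^ (-(1:ℝ)/2)) (a := π / 4) (b := π / 2) fun φ hφ => by
        rw [uIoc_of_le (by linarith)] at hφ
        have h10 := hlow φ (Ioc_subset_Icc_self hφ)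
        rw [norm_of_nonneg (rpow_nonneg (by linarith) _)]
        exact rpow_le_rpow_of_nonpos (by norm_num) h10 (by norm_num)
    rw [← norm_eq_abs]
    convert this using 2
    rw [abs_of_pos (by linarith)]
    ring

lemma one_add_F_pi_sub_eq {s : ℝ} (ht : 0 < cos (s / 2)) :
    1 + F (π - s) = (1 - cos (s / 2)) * (4 * cos (s / 2) ^ 2 + 4 * cos (s / 2) - 1) /
      (3 * cos (s / 2)) := by
  have hchord : 2 - 2 * cos (π - s) = (2 * cos (s / 2)) ^ 2 := by
    rw [cos_pi_sub, mul_pow, cos_sq (s / 2), show 2 * (s / 2) = s by ring]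
    ring
  rw [one_add_F_eq (by rw [hchord]; positivity), hchord, sqrt_sq (by positivity)]
  field_simp
  ring

lemma abs_cos_half_sub_le {s : ℝ} (hs : |s| ≤ 2) :
    |cos (s / 2) - (1 - s ^ 2 / 8)| ≤ 5 / 1536 * s ^ 4 := by
  have := cos_bound (x := s / 2) (by rw [abs_div, abs_two]; linarith)
  rw [abs_div, abs_two, div_pow, div_pow, Even.pow_abs ⟨2, rfl⟩] at this
  rwa [show 1 - s ^ 2 / 8 = 1 - s ^ 2 / 2 ^ 2 / 2 by ring,
    show 5 / 1536 * s ^ 4 = s ^ 4 / 2 ^ 4 * (5 / 96) by ring]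

/-- `u` stands for the versine `1 - cos (s / 2)`, in terms of which `1 + F (π - s)` is the
rational function below (see `one_add_F_pi_sub_eq`). -/
lemma versine_ratio_bounds {s u : ℝ} (hs : s ^ 2 ≤ 2.4807) (hu0 : 0 ≤ u) (hu : u ≤ 0.293)
    (hus : |u - s ^ 2 / 8| ≤ 5 / 1536 * s ^ 4) :
    1 / 8 * s ^ 2 ≤ u * (4 * (1 - u) ^ 2 + 4 * (1 - u) - 1) / (3 * (1 - u)) ∧
      |u * (4 * (1 - u) ^ 2 + 4 * (1 - u) - 1) / (3 * (1 - u)) - 7 / 24 * s ^ 2| ≤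
        1 / 7 * s ^ 4 := by
  obtain ⟨huh, hul⟩ := abs_le.mp hus
  have hs4 : s ^ 4 ≤ 2.4807 * s ^ 2 := by nlinarith [sq_nonneg s]
  have h1 : u ≤ 0.1332 * s ^ 2 := by linarith
  have h2 : u * s ^ 2 ≤ 0.1332 * s ^ 4 := by nlinarith [mul_le_mul_of_nonneg_right h1 (sq_nonneg s)]
  have h3 : u ^ 2 ≤ 0.1332 * (u * s ^ 2) := by nlinarith [mul_le_mul_of_nonneg_right h1 hu0]
  have h4 : u ^ 3 ≤ 0.293 * u ^ 2 := by nlinarith [mul_le_mul_of_nonneg_right hu (sq_nonneg u)]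
  have h5 : s ^ 4 * u ≤ 0.293 * s ^ 4 := by
    nlinarith [mul_le_mul_of_nonneg_left hu (by positivity : (0:ℝ) ≤ s ^ 4)]
  have h6 : u ^ 2 ≤ 0.01775 * s ^ 4 := by nlinarith
  have h7 : 0 ≤ u ^ 2 := sq_nonneg u
  have h8 : 0 ≤ s ^ 2 * u := by positivity
  have hden : (0:ℝ) < 3 * (1 - u) := by linarith
  refine ⟨by rw [le_div_iff₀ hden]; nlinarith, abs_le.mpr ⟨?_, ?_⟩⟩
  · have : 7 / 24 * s ^ 2 - 1 / 7 * s ^ 4 ≤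
        u * (4 * (1 - u) ^ 2 + 4 * (1 - u) - 1) / (3 * (1 - u)) := by
      rw [le_div_iff₀ hden]
      nlinarith
    linarith
  · have : u * (4 * (1 - u) ^ 2 + 4 * (1 - u) - 1) / (3 * (1 - u)) ≤
        7 / 24 * s ^ 2 + 1 / 7 * s ^ 4 := by
      rw [div_le_iff₀ hden]
      nlinarith
    linarith

lemma one_add_F_pi_sub_bounds {s : ℝ} (h0 : 0 ≤ s) (h2 : s ≤ π / 2) :
    1 / 8 * s ^ 2 ≤ 1 + F (π - s) ∧ |1 + F (π - s) - 7 / 24 * s ^ 2| ≤ 1 / 7 * s ^ 4 := by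
  have hπ : π < 3.15 := by linarith [pi_lt_d2]
  have ht : 0.707 < cos (s / 2) := by
    have : cos (π / 4) ≤ cos (s / 2) := strictAntiOn_cos.antitoneOn
      ⟨by linarith, by linarith⟩ ⟨by positivity, by linarith [pi_pos]⟩ (by linarith)
    rw [cos_pi_div_four] at this
    nlinarith [sq_sqrt (show (0:ℝ) ≤ 2 by norm_num), sqrt_nonneg 2]
  have hcos := abs_cos_half_sub_le (s := s) (by rw [abs_of_nonneg h0]; linarith)
  have hcos1 := cos_le_one (s / 2)
  rw [one_add_F_pi_sub_eq (by linarith)]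
  set u := 1 - cos (s / 2)
  rw [show cos (s / 2) = 1 - u by ring] at hcos ⊢
  exact versine_ratio_bounds (by nlinarith) (by linarith) (by linarith)
    (by rw [abs_sub_comm]; convert hcos using 2; ring)

lemma abs_inv_sqrt_sub_inv_sqrt {a b : ℝ} (ha : 0 < a) (hb : 0 < b) :
    |(√a)⁻¹ - (√b)⁻¹| = |b - a| / (√a * √b * (√a + √b)) := by
  have hsa := sqrt_pos.mpr ha
  have hsb := sqrt_pos.mpr hb
  rw [← abs_of_pos (by positivity : 0 < √a * √b * (√a + √b)), ← abs_div,
    ← sq_sqrt ha.le, ← sq_sqrt hb.le, sqrt_sq hsa.le, sqrt_sq hsb.le]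
  congr 1
  field_simp
  ring

lemma abs_integrand_pi_sub_sub_le {δ s : ℝ} (hδ : 0 < δ) (h0 : 0 ≤ s) (h2 : s ≤ π / 2) :
    |(1 + δ + F (π - s)) ^ (-(1:ℝ)/2) - (δ + 7 / 24 * s ^ 2) ^ (-(1:ℝ)/2)| ≤ 2 * s := by
  obtain ⟨hG, hGs⟩ := one_add_F_pi_sub_bounds h0 h2
  rw [show 1 + δ + F (π - s) = δ + (1 + F (π - s)) by ring]
  set G := 1 + F (π - s)
  have ha : 0 < δ + G := by nlinarith
  have hb : 0 < δ + 7 / 24 * s ^ 2 := by positivity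
  rw [rpow_neg_half_eq_inv_sqrt ha.le, rpow_neg_half_eq_inv_sqrt hb.le,
    abs_inv_sqrt_sub_inv_sqrt ha hb, div_le_iff₀ (by positivity)]
  have hsa : 7 / 20 * s ≤ √(δ + G) := (le_sqrt (by positivity) ha.le).mpr (by nlinarith)
  have hsb : 1 / 2 * s ≤ √(δ + 7 / 24 * s ^ 2) :=
    (le_sqrt (by positivity) hb.le).mpr (by nlinarith)
  calc |δ + 7 / 24 * s ^ 2 - (δ + G)| = |G - 7 / 24 * s ^ 2| := by
        rw [abs_sub_comm]; ring_nf
    _ ≤ 2 * s * (7 / 20 * s * (1 / 2 * s) * (7 / 20 * s + 1 / 2 * s)) := by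
        nlinarith [pow_nonneg h0 4]
    _ ≤ 2 * s * (√(δ + G) * √(δ + 7 / 24 * s ^ 2) * (√(δ + G) + √(δ + 7 / 24 * s ^ 2))) := by
        gcongr

lemma intervalIntegrable_and_abs_integral_pi_div_two_pi_sub_le {δ : ℝ} (hδ : 0 < δ) :
    IntervalIntegrable (fun φ => (1 + δ + F φ) ^ (-(1:ℝ)/2)) volume (π / 2) π ∧
      |(∫ φ in (π / 2)..π, (1 + δ + F φ) ^ (-(1:ℝ)/2)) -
          ∫ s in (0:ℝ)..(π / 2), (δ + 7 / 24 * s ^ 2) ^ (-(1:ℝ)/2)| ≤ π ^ 2 / 4 := by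
  have hπ := pi_pos
  have hint : IntervalIntegrable (fun φ => (1 + δ + F φ) ^ (-(1:ℝ)/2)) volume (π / 2) π := by
    refine ContinuousOn.intervalIntegrable ?_
    rw [uIcc_of_le (by linarith)]
    exact continuousOn_integrand δ (fun φ hφ => ⟨by linarith [hφ.1], hφ.2⟩)
      fun φ hφ => by linarith [one_add_F_nonneg (by linarith [hφ.1]) hφ.2]
  have hint' : IntervalIntegrable (fun s => (1 + δ + F (π - s)) ^ (-(1:ℝ)/2)) volume 0 (π / 2) := by
    have := hint.comp_sub_left π
    rw [sub_self, show π - π / 2 = π / 2 by ring] at this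
    exact this.symm
  have hmodel : IntervalIntegrable (fun s => (δ + 7 / 24 * s ^ 2) ^ (-(1:ℝ)/2)) volume 0 (π / 2) :=
    (Continuous.rpow_const (by fun_prop) fun s =>
      Or.inl (by positivity : (0:ℝ) < δ + 7 / 24 * s ^ 2).ne').intervalIntegrable _ _
  refine ⟨hint, ?_⟩
  have hsub := intervalIntegral.integral_comp_sub_left
    (fun φ => (1 + δ + F φ) ^ (-(1:ℝ)/2)) π (a := 0) (b := π / 2)
  rw [sub_zero, show π - π / 2 = π / 2 by ring] at hsub
  rw [← hsub, ← intervalIntegral.integral_sub hint' hmodel, ← norm_eq_abs]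
  have hbound : ∀ s ∈ Ioc 0 (π / 2),
      ‖(1 + δ + F (π - s)) ^ (-(1:ℝ)/2) - (δ + 7 / 24 * s ^ 2) ^ (-(1:ℝ)/2)‖ ≤ 2 * s :=
    fun s hs => by rw [norm_eq_abs]; exact abs_integrand_pi_sub_sub_le hδ hs.1.le hs.2
  refine (intervalIntegral.norm_integral_le_of_norm_le (by positivity) (ae_of_all _ hbound)
    ((continuous_const.mul continuous_id).intervalIntegrable _ _)).trans_eq ?_
  rw [intervalIntegral.integral_const_mul, integral_id]
  ring

lemma integral_rpow_neg_half_add_mul_sq {δ k : ℝ} (hδ : 0 < δ) (hk : 0 < k) (L : ℝ) :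
    ∫ s in (0:ℝ)..L, (δ + k * s ^ 2) ^ (-(1:ℝ)/2) = (√k)⁻¹ * arsinh (√(k / δ) * L) := by
  have hderiv : ∀ s : ℝ, HasDerivAt (fun s => (√k)⁻¹ * arsinh (√(k / δ) * s))
      ((δ + k * s ^ 2) ^ (-(1:ℝ)/2)) s := by
    intro s
    refine (((hasDerivAt_id s).const_mul (√(k / δ))).arsinh.const_mul (√k)⁻¹).congr_deriv ?_
    simp only [id, smul_eq_mul, mul_one]
    rw [mul_pow, sq_sqrt (by positivity), rpow_neg_half_eq_inv_sqrt (by positivity),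
      show 1 + k / δ * s ^ 2 = (δ + k * s ^ 2) / δ by field_simp, sqrt_div' _ hδ.le,
      sqrt_div' _ hδ.le]
    have := sqrt_pos.mpr hδ
    have := sqrt_pos.mpr hk
    have : 0 < √(δ + k * s ^ 2) := sqrt_pos.mpr (by positivity)
    field_simp
  rw [intervalIntegral.integral_eq_sub_of_hasDerivAt (fun s _ => hderiv s)
    ((Continuous.rpow_const (by fun_prop) fun s =>
      Or.inl (by positivity : (0:ℝ) < δ + k * s ^ 2).ne').intervalIntegrable _ _)]
  simp

lemma exists_abs_integral_rpow_neg_half_add_mul_sq_sub_log_le {k L : ℝ} (hk : 0 < k)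
    (hL : 0 < L) : ∃ C, ∀ δ ∈ Ioc (0:ℝ) 1,
      |(∫ s in (0:ℝ)..L, (δ + k * s ^ 2) ^ (-(1:ℝ)/2)) - (2 * √k)⁻¹ * log (1 / δ)| ≤ C := by
  have hsk := sqrt_pos.mpr hk
  refine ⟨(√k)⁻¹ * max |log (L * √k + √(k * L ^ 2))| |log (L * √k + √(1 + k * L ^ 2))|,
    fun δ ⟨hδ, hδ1⟩ => ?_⟩
  have hsδ := sqrt_pos.mpr hδ
  have harg : √(k / δ) * L + √(1 + (√(k / δ) * L) ^ 2) = (L * √k + √(δ + k * L ^ 2)) / √δ := by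
    rw [mul_pow, sq_sqrt (by positivity), show 1 + k / δ * L ^ 2 = (δ + k * L ^ 2) / δ by
      field_simp, sqrt_div' _ hδ.le, sqrt_div' _ hδ.le]
    field_simp
  have hR : 0 < L * √k + √(δ + k * L ^ 2) := by positivity
  rw [integral_rpow_neg_half_add_mul_sq hδ hk, arsinh, harg, log_div hR.ne' hsδ.ne',
    log_sqrt hδ.le, one_div, log_inv,
    show ∀ a b : ℝ, (√k)⁻¹ * (a - b / 2) - (2 * √k)⁻¹ * -b = (√k)⁻¹ * a by
      intro a b; field_simp; ring,
    abs_mul, abs_of_pos (inv_pos.mpr hsk)]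
  gcongr
  exact abs_le_max_abs_abs
    (log_le_log (by positivity) (by gcongr; linarith))
    (log_le_log hR (by gcongr))

end Horseshoe

open Horseshoe

theorem stmt0 :
    ∃ φmin : ℝ → ℝ,
      (∀ δ : ℝ, 0 < δ →
        φmin δ ∈ Set.Ioo 0 (π/3) ∧
        1 + δ + F (φmin δ) = 0 ∧
        (∀ φ ∈ Set.Ioo 0 (π/3), 1 + δ + F φ = 0 → φ = φmin δ) ∧
        (∀ φ ∈ Set.Ioc (φmin δ) π, 0 < 1 + δ + F φ)) ∧
      ∃ C : ℝ, 0 < C ∧ ∃ δ₀ ∈ Set.Ioo (0:ℝ) 1, ∀ δ ∈ Set.Ioo (0:ℝ) δ₀,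
        |(∫ φ in (φmin δ)..π, (1 + δ + F φ) ^ (-(1:ℝ)/2)) -
            Real.sqrt (6/7) * Real.log (1/δ)| ≤ C := by
  refine ⟨phiMin, fun δ hδ => ⟨⟨phiMin_pos hδ, (phiMin_mem hδ).2⟩, one_add_add_F_phiMin hδ,
    fun _ hφ h => eq_phiMin_of_root hδ hφ h, fun _ hφ => one_add_add_F_pos hδ hφ⟩, ?_⟩
  obtain ⟨C₁, hC₁⟩ := exists_abs_integral_phiMin_pi_div_four_le
  obtain ⟨C₄, hC₄⟩ := exists_abs_integral_rpow_neg_half_add_mul_sq_sub_log_le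
    (k := 7 / 24) (L := π / 2) (by norm_num) (by positivity)
  refine ⟨max (C₁ + (1 / 10 : ℝ) ^ (-(1:ℝ)/2) * (π / 4) + π ^ 2 / 4 + C₄) 1,
    lt_max_of_lt_right one_pos, 1 / 2, ⟨by norm_num, by norm_num⟩, fun δ hδ => ?_⟩
  have hδ1 : δ ∈ Ioc 0 1 := ⟨hδ.1, by linarith [hδ.2]⟩
  obtain ⟨hi₁, hI₁⟩ := hC₁ δ hδ1
  obtain ⟨hi₂, hI₂⟩ := intervalIntegrable_and_abs_integral_pi_div_four_pi_div_two_le hδ.1.le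
  obtain ⟨hi₃, hI₃⟩ := intervalIntegrable_and_abs_integral_pi_div_two_pi_sub_le hδ.1
  have hI₄ := hC₄ δ hδ1
  have hcoef : √(6 / 7) = (2 * √(7 / 24))⁻¹ := by
    refine (inv_eq_of_mul_eq_one_left ?_).symm
    rw [mul_left_comm, ← sqrt_mul (by norm_num), show (6 / 7 : ℝ) * (7 / 24) = (1 / 2) ^ 2 by
      norm_num, sqrt_sq (by norm_num)]
    norm_num
  rw [hcoef, ← intervalIntegral.integral_add_adjacent_intervals (hi₁.trans hi₂) hi₃,
    ← intervalIntegral.integral_add_adjacent_intervals hi₁ hi₂]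
  refine le_max_of_le_left ?_
  rw [abs_le] at hI₁ hI₂ hI₃ hI₄ ⊢
  constructor <;> linarith [hI₁.1, hI₁.2, hI₂.1, hI₂.2, hI₃.1, hI₃.2, hI₄.1, hI₄.2]
end

section
/- There exist η > 0 and a real-analytic function x : (−η, η) → ℝ such that x(0) = (√2 − 1)/2, for every δ ∈ (−η, η) one has 4·x(δ)³ − (5 + 3δ)·x(δ) + 1 = 0 and 0 < x(δ) < 1, and the function φmin(δ) := 2·arcsin(x(δ)) satisfies φmin(0) = 2·arcsin((√2 − 1)/2) and φmin′(0) = −3(√2 − 1)/((3√2 − 2)·√(1 + 2√2)). (Consequently φmin(δ) = 2 arcsin((√2−1)/2) − c₀·δ + O(δ²) with c₀ = 3(√2−1)/((3√2−2)√(1+2√2)).) -/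
/-!
Solving the cubic for `δ` gives `δ = g(X) := (4X³ - 5X + 1) / (3X)`, a function analytic away
from `X = 0` with `g((√2 - 1)/2) = 0` and `g'((√2 - 1)/2) ≠ 0`. The analytic inverse function
theorem then yields `x = g⁻¹` near `δ = 0`, with `x'(0) = 1 / g'((√2 - 1)/2)`, and the chain rule
for `arcsin` gives `φmin'(0)`.
-/

open Real Filter Topology

section LocalInverse

variable {𝕜 : Type*} [NontriviallyNormedField 𝕜] [CompleteSpace 𝕜] [CharZero 𝕜]
  {f : 𝕜 → 𝕜} {f' a : 𝕜}

theorem AnalyticAt.exists_analytic_rightInverse (hf : AnalyticAt 𝕜 f a) (hf' : HasDerivAt f f' a)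
    (hf'0 : f' ≠ 0) :
    ∃ r : 𝕜 → 𝕜, r (f a) = a ∧ HasDerivAt r f'⁻¹ (f a) ∧
      ∀ᶠ y in 𝓝 (f a), AnalyticAt 𝕜 r y ∧ f (r y) = y := by
  have hd : deriv f a ≠ 0 := hf'.deriv ▸ hf'0
  refine ⟨hf.hasStrictDerivAt.localInverse _ _ _ hd, ?_, ?_, ?_⟩
  · exact HasStrictFDerivAt.localInverse_apply_image ..
  · simpa [hf'.deriv] using (hf.hasStrictDerivAt.to_localInverse hd).hasDerivAt
  · exact (hf.analyticAt_localInverse hd).eventually_analyticAt.and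
      (hf.hasStrictDerivAt.eventually_right_inverse hd)

end LocalInverse

/-- The energy shift `δ` for which `X` is a root of `4X³ - (5 + 3δ)X + 1`. -/
noncomputable def horseshoeShift (X : ℝ) : ℝ := (4 * X ^ 3 - 5 * X + 1) / (3 * X)

theorem cubic_eq_zero_of_horseshoeShift_eq {X δ : ℝ} (hX : X ≠ 0) (h : horseshoeShift X = δ) :
    4 * X ^ 3 - (5 + 3 * δ) * X + 1 = 0 := by
  rw [horseshoeShift, div_eq_iff (by positivity)] at h
  linear_combination h

theorem analyticAt_horseshoeShift {X : ℝ} (hX : X ≠ 0) : AnalyticAt ℝ horseshoeShift X := by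
  unfold horseshoeShift
  fun_prop (disch := positivity)

theorem hasDerivAt_horseshoeShift {X : ℝ} (hX : X ≠ 0) :
    HasDerivAt horseshoeShift ((8 * X ^ 3 - 1) / (3 * X ^ 2)) X := by
  have hnum : HasDerivAt (fun y : ℝ => 4 * y ^ 3 - 5 * y + 1) (4 * (3 * X ^ 2) - 5) X := by
    simpa using (((hasDerivAt_pow 3 X).const_mul 4).sub ((hasDerivAt_id X).const_mul 5)).add_const 1
  have hden : HasDerivAt (fun y : ℝ => 3 * y) 3 X := by
    simpa using (hasDerivAt_id X).const_mul (3 : ℝ)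
  refine (hnum.fun_div hden (by positivity)).congr_deriv ?_
  field_simp
  ring

theorem horseshoeShift_root : horseshoeShift ((√2 - 1) / 2) = 0 := by
  have hs : √2 ^ 2 = 2 := sq_sqrt (by norm_num)
  rw [horseshoeShift, div_eq_zero_iff]
  left
  linear_combination (√2 - 3) / 2 * hs

theorem sqrt_one_sub_sq_root : √(1 - ((√2 - 1) / 2) ^ 2) = √(1 + 2 * √2) / 2 := by
  have hs : √2 ^ 2 = 2 := sq_sqrt (by norm_num)
  have ht : √(1 + 2 * √2) ^ 2 = 1 + 2 * √2 := sq_sqrt (by positivity)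
  rw [← sqrt_sq (by positivity : 0 ≤ √(1 + 2 * √2) / 2)]
  congr 1
  linear_combination (-1 / 4 : ℝ) * hs - ht / 4

theorem hasDerivAt_horseshoeShift_root :
    HasDerivAt horseshoeShift (4 * (5 * √2 - 8) / (3 * (3 - 2 * √2))) ((√2 - 1) / 2) := by
  have hs : √2 ^ 2 = 2 := sq_sqrt (by norm_num)
  have hs1 := one_lt_sqrt_two
  convert hasDerivAt_horseshoeShift (X := (√2 - 1) / 2) (by linarith) using 1
  rw [div_eq_div_iff (by nlinarith) (by nlinarith)]
  linear_combination (6 * √2 ^ 2 - 12 * √2 + 3) * hs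

theorem two_mul_arcsin_deriv_root :
    2 * (1 / √(1 - ((√2 - 1) / 2) ^ 2) * (4 * (5 * √2 - 8) / (3 * (3 - 2 * √2)))⁻¹) =
      -(3 * (√2 - 1) / ((3 * √2 - 2) * √(1 + 2 * √2))) := by
  have hs : √2 ^ 2 = 2 := sq_sqrt (by norm_num)
  have hs1 := one_lt_sqrt_two
  have hs2 := sqrt_two_lt_three_halves
  have ht : 0 < √(1 + 2 * √2) := sqrt_pos.2 (by positivity)
  have h8 : 5 * √2 - 8 ≠ 0 := by linarith
  have h3 : 3 * √2 - 2 ≠ 0 := by linarith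
  rw [sqrt_one_sub_sq_root]
  field_simp
  rw [neg_div', div_eq_div_iff (by linarith) (by linarith)]
  linear_combination -4 * hs

theorem stmt2 :
    ∃ η : ℝ, 0 < η ∧ ∃ x : ℝ → ℝ,
      AnalyticOnNhd ℝ x (Set.Ioo (-η) η) ∧
      x 0 = (Real.sqrt 2 - 1) / 2 ∧
      (∀ δ ∈ Set.Ioo (-η) η,
        4 * x δ ^ 3 - (5 + 3 * δ) * x δ + 1 = 0 ∧ 0 < x δ ∧ x δ < 1) ∧
      2 * Real.arcsin (x 0) = 2 * Real.arcsin ((Real.sqrt 2 - 1) / 2) ∧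
      HasDerivAt (fun δ => 2 * Real.arcsin (x δ))
        (-(3 * (Real.sqrt 2 - 1) /
            ((3 * Real.sqrt 2 - 2) * Real.sqrt (1 + 2 * Real.sqrt 2)))) 0 := by
  have hs1 := one_lt_sqrt_two
  have hs2 := sqrt_two_lt_three_halves
  have hx₀ : (√2 - 1) / 2 ∈ Set.Ioo (0 : ℝ) 1 := ⟨by linarith, by linarith⟩
  obtain ⟨x, hx0, hx', hx⟩ := (analyticAt_horseshoeShift hx₀.1.ne').exists_analytic_rightInverse
    hasDerivAt_horseshoeShift_root (div_ne_zero (by linarith) (by linarith))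
  rw [horseshoeShift_root] at hx0 hx' hx
  have hmem : ∀ᶠ δ in 𝓝 0, x δ ∈ Set.Ioo 0 1 :=
    hx'.continuousAt.eventually_mem (hx0 ▸ isOpen_Ioo.mem_nhds hx₀)
  obtain ⟨η, hη, hball⟩ := Metric.eventually_nhds_iff_ball.1 (hx.and hmem)
  rw [Real.ball_zero_eq_Ioo] at hball
  refine ⟨η, hη, x, fun δ hδ ↦ (hball δ hδ).1.1, hx0, fun δ hδ ↦ ?_, by rw [hx0], ?_⟩
  · obtain ⟨⟨-, hshift⟩, hpos, hlt⟩ := hball δ hδ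
    exact ⟨cubic_eq_zero_of_horseshoeShift_eq hpos.ne' hshift, hpos, hlt⟩
  · have harcsin : HasDerivAt arcsin (1 / √(1 - ((√2 - 1) / 2) ^ 2)) (x 0) := by
      rw [hx0]
      exact hasDerivAt_arcsin (by linarith) (by linarith)
    rw [← two_mul_arcsin_deriv_root]
    exact (harcsin.comp 0 hx').const_mul 2
end

section
/- Fix C ≥ 1 and β with 4/9 < β < 1/2, and set q = (3β − 1)/15. There exist a ∈ (0, 1) and ε₀ ∈ (0, 1) such that for every ε ∈ (0, ε₀) and all real numbers ω₁, ω₂, Ω₁, Ω₂ satisfying √ε/(C·|ln ε|) ≤ |ω₁| ≤ C·√ε/|ln ε|, 1/C ≤ |ω₂| ≤ C, ε/C ≤ |Ω₁| ≤ C·ε, and ε/(C·|ln ε|) ≤ |Ω₂| ≤ C·ε/|ln ε|, the following hold with γ₀ := a·ε/|ln ε| and K₀ := C·ε^(−q)·|ln ε|^(−3): |Ω₁| ≥ γ₀, |Ω₂| ≥ γ₀, |Ω₁ − Ω₂| ≥ γ₀, and for all integers k₁, k₂, l₁, l₂ with 0 < max(|k₁|, |k₂|) ≤ K₀ and |l₁|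 + |l₂| ≤ 2, one has |k₁·ω₁ + k₂·ω₂ + l₁·Ω₁ + l₂·Ω₂| ≥ γ₀. -/
/-!
Write `L = |log ε|` and take `γ₀ = ε / (2 C L)`, i.e. `a = 1 / (2 C)`. The secular frequencies
satisfy `|Ω₁| ≍ ε` and `|Ω₂| ≍ ε / L`, so each is at least `γ₀`, and they differ by at least `γ₀`
once `L ≫ C²`. In a combination with `k₂ ≠ 0` the fast term `|k₂ ω₂| ≥ 1 / C` wins: the cutoff
gives `|k₁ ω₁| ≤ K₀ C √ε / L ≤ C² ε^(1/2 - q)` with `1/2 - q > 0`, and the secular part is `O(ε)`.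
If `k₂ = 0`, then `k₁ ≠ 0` and the semi-fast term `|k₁ ω₁| ≥ √ε / (C L)` beats the `O(ε)` secular
part because `√ε · L → 0`. All the smallness requirements hold as `ε → 0⁺`.
-/

open Real Filter Topology Set

lemma exists_Ioo_forall_of_eventually_nhdsGT_zero {P : ℝ → Prop}
    (h : ∀ᶠ ε in 𝓝[>] (0:ℝ), P ε) : ∃ ε₀ ∈ Ioo (0:ℝ) 1, ∀ ε ∈ Ioo 0 ε₀, P ε := by
  obtain ⟨u, hu, hsub⟩ := mem_nhdsGT_iff_exists_Ioo_subset.1 h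
  refine ⟨min u (1 / 2), ⟨lt_min hu (by norm_num), by linarith [min_le_right u (1 / 2)]⟩,
    fun ε hε => hsub ⟨hε.1, hε.2.trans_le (min_le_left _ _)⟩⟩

lemma tendsto_sqrt_mul_abs_log_nhdsGT_zero :
    Tendsto (fun ε => √ε * |log ε|) (𝓝[>] 0) (𝓝 0) := by
  have h := (tendsto_log_mul_rpow_nhdsGT_zero (r := 1 / 2) (by norm_num)).abs
  rw [abs_zero] at h
  refine h.congr' (eventually_mem_nhdsWithin.mono fun ε (hε : 0 < ε) => ?_)
  rw [abs_mul, abs_of_pos (rpow_pos_of_pos hε _), mul_comm, ← sqrt_eq_rpow]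

lemma tendsto_rpow_nhdsGT_zero {s : ℝ} (hs : 0 < s) :
    Tendsto (fun ε : ℝ => ε ^ s) (𝓝[>] 0) (𝓝 0) := by
  have h := (continuousAt_rpow_const 0 s (Or.inr hs.le)).tendsto
  rw [zero_rpow hs.ne'] at h
  exact h.mono_left nhdsWithin_le_nhds

lemma eventually_scale_bounds {C s : ℝ} (hC : 0 < C) (hs : 0 < s) :
    ∀ᶠ ε in 𝓝[>] (0:ℝ), C ^ 2 + 1 ≤ |log ε| ∧ 4 * C ^ 2 * (√ε * |log ε|) ≤ 1 ∧
      C ^ 2 * ε ^ s + 2 * C * ε ≤ 1 / (2 * C) := by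
  have hlog := (tendsto_abs_atBot_atTop.comp tendsto_log_nhdsGT_zero).eventually_ge_atTop
    (C ^ 2 + 1)
  have hsemi := (tendsto_sqrt_mul_abs_log_nhdsGT_zero.const_mul (4 * C ^ 2)).eventually_le_const
    (u := 1) (by norm_num)
  have hfast : Tendsto (fun ε : ℝ => C ^ 2 * ε ^ s + 2 * C * ε) (𝓝[>] 0) (𝓝 0) := by
    simpa using ((tendsto_rpow_nhdsGT_zero hs).const_mul (C ^ 2)).add
      ((tendsto_id.mono_left nhdsWithin_le_nhds).const_mul (2 * C))
  exact hlog.and (hsemi.and (hfast.eventually_le_const (by positivity)))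

lemma abs_le_abs_intCast_mul {k : ℤ} (hk : k ≠ 0) (x : ℝ) : |x| ≤ |(k : ℝ) * x| := by
  rw [abs_mul]
  exact le_mul_of_one_le_left (abs_nonneg x) (by exact_mod_cast Int.one_le_abs hk)

lemma abs_intCast_mul_add_intCast_mul_le {l₁ l₂ n : ℤ} (hl : |l₁| + |l₂| ≤ n) {x y M : ℝ}
    (hx : |x| ≤ M) (hy : |y| ≤ M) : |(l₁ : ℝ) * x + l₂ * y| ≤ n * M := by
  have hM : 0 ≤ M := (abs_nonneg x).trans hx
  have hl' : |(l₁ : ℝ)| + |(l₂ : ℝ)| ≤ n := by exact_mod_cast hl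
  calc |(l₁ : ℝ) * x + l₂ * y| ≤ |(l₁ : ℝ)| * |x| + |(l₂ : ℝ)| * |y| := by
        simpa only [abs_mul] using abs_add_le ((l₁ : ℝ) * x) (l₂ * y)
    _ ≤ |(l₁ : ℝ)| * M + |(l₂ : ℝ)| * M := by gcongr
    _ ≤ n * M := by rw [← add_mul]; gcongr

lemma abs_sub_abs_sub_abs_le_abs_add_add (x y r : ℝ) : |y| - |x| - |r| ≤ |x + y + r| := by
  have h := abs_add_three (x + y + r) (-x) (-r)
  rw [abs_neg, abs_neg, show x + y + r + -x + -r = y by ring] at h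
  linarith

section Scales

variable {C ε L : ℝ}

lemma abs_mul_le_of_le_cutoff {q : ℝ} (hε : 0 < ε) (hL : 1 ≤ L) {k ω : ℝ}
    (hk : |k| ≤ C * ε ^ (-q) / L ^ 3) (hω : |ω| ≤ C * √ε / L) :
    |k * ω| ≤ C ^ 2 * ε ^ (1 / 2 - q) := by
  have hpow : ε ^ (-q) * √ε = ε ^ (1 / 2 - q) := by
    rw [sqrt_eq_rpow, ← rpow_add hε]; ring_nf
  calc |k * ω| ≤ C * ε ^ (-q) / L ^ 3 * (C * √ε / L) := by
        rw [abs_mul]; exact mul_le_mul hk hω (abs_nonneg ω) ((abs_nonneg k).trans hk)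
    _ = C ^ 2 * ε ^ (1 / 2 - q) / L ^ 4 := by rw [← hpow]; field_simp
    _ ≤ C ^ 2 * ε ^ (1 / 2 - q) := div_le_self (by positivity) (one_le_pow₀ hL)

lemma div_le_abs_sub_of_scale_separation (hC : 1 ≤ C) (hε : 0 ≤ ε) (hL : C ^ 2 + 1 ≤ L)
    {Ω₁ Ω₂ : ℝ} (h₁ : ε / C ≤ |Ω₁|) (h₂ : |Ω₂| ≤ C * ε / L) :
    ε / (2 * C * L) ≤ |Ω₁ - Ω₂| := by
  have hC0 : 0 < C := by linarith
  have hL0 : 0 < L := by nlinarith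
  have hsep : ε / (2 * C * L) + C * ε / L ≤ ε / C := by
    rw [div_add_div _ _ (by positivity) hL0.ne', div_le_div_iff₀ (by positivity) hC0]
    nlinarith [mul_nonneg (mul_nonneg (mul_nonneg hC0.le hL0.le) hε)
      (by nlinarith : (0:ℝ) ≤ 2 * L - 2 * C ^ 2 - 1)]
  linarith [abs_sub_abs_le_abs_sub Ω₁ Ω₂]

lemma div_le_abs_intCast_mul_add (hC : 0 < C) (hε : 0 < ε) (hε1 : ε ≤ 1) (hL : 0 < L)
    (hsmall : 4 * C ^ 2 * (√ε * L) ≤ 1) {k : ℤ} (hk : k ≠ 0) {ω r : ℝ}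
    (hω : √ε / (C * L) ≤ |ω|) (hr : |r| ≤ 2 * C * ε) :
    ε / (2 * C * L) ≤ |k * ω + r| := by
  have hsq : ε ≤ √ε := by
    have h := mul_le_mul_of_nonneg_left (sqrt_le_one.2 hε1) (sqrt_nonneg ε)
    rwa [mul_self_sqrt hε.le, mul_one] at h
  have hεL : 4 * C ^ 2 * L * ε ≤ √ε := by
    have h := mul_le_mul_of_nonneg_right hsmall (sqrt_nonneg ε)
    nlinarith [mul_self_sqrt hε.le]
  have hgap : ε / (2 * C * L) + 2 * C * ε ≤ √ε / (C * L) := by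
    rw [div_add' _ _ _ (by positivity), div_le_div_iff₀ (by positivity) (by positivity)]
    nlinarith [mul_le_mul_of_nonneg_left (add_le_add hsq hεL) (by positivity : 0 ≤ C * L)]
  linarith [abs_sub_abs_le_abs_add ((k : ℝ) * ω) r, abs_le_abs_intCast_mul hk ω]

lemma div_le_abs_add_intCast_mul_add (hC : 0 < C) (hε1 : ε ≤ 1) (hL : 1 ≤ L) {k : ℤ}
    (hk : k ≠ 0) {x ω r : ℝ} (hω : 1 / C ≤ |ω|) (hxr : |x| + |r| ≤ 1 / (2 * C)) :
    ε / (2 * C * L) ≤ |x + k * ω + r| := by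
  have hγ : ε / (2 * C * L) ≤ 1 / (2 * C) := by
    rw [div_le_div_iff₀ (by positivity) (by positivity)]; nlinarith
  have hhalf : 1 / (2 * C) + 1 / (2 * C) = 1 / C := by field_simp; ring
  linarith [abs_sub_abs_sub_abs_le_abs_add_add x ((k : ℝ) * ω) r, abs_le_abs_intCast_mul hk ω]

end Scales

theorem stmt7_general (C : ℝ) (hC : 1 ≤ C) (β : ℝ) (hβ₂ : β < 1/2) :
    ∃ a ∈ Set.Ioo (0:ℝ) 1, ∃ ε₀ ∈ Set.Ioo (0:ℝ) 1,
      ∀ ε ∈ Set.Ioo (0:ℝ) ε₀, ∀ ω₁ ω₂ Ω₁ Ω₂ : ℝ,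
        Real.sqrt ε / (C * |Real.log ε|) ≤ |ω₁| →
        |ω₁| ≤ C * Real.sqrt ε / |Real.log ε| →
        1 / C ≤ |ω₂| → |ω₂| ≤ C →
        ε / C ≤ |Ω₁| → |Ω₁| ≤ C * ε →
        ε / (C * |Real.log ε|) ≤ |Ω₂| → |Ω₂| ≤ C * ε / |Real.log ε| →
        a * ε / |Real.log ε| ≤ |Ω₁| ∧
        a * ε / |Real.log ε| ≤ |Ω₂| ∧
        a * ε / |Real.log ε| ≤ |Ω₁ - Ω₂| ∧
        ∀ k₁ k₂ l₁ l₂ : ℤ,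
          0 < max |k₁| |k₂| →
          ((max |k₁| |k₂| : ℤ) : ℝ) ≤ C * ε ^ (-((3*β - 1)/15)) / |Real.log ε| ^ 3 →
          |l₁| + |l₂| ≤ 2 →
          a * ε / |Real.log ε| ≤
            |(k₁ : ℝ) * ω₁ + (k₂ : ℝ) * ω₂ + (l₁ : ℝ) * Ω₁ + (l₂ : ℝ) * Ω₂| := by
  have hC0 : 0 < C := by linarith
  obtain ⟨ε₀, hε₀, hsmall⟩ := exists_Ioo_forall_of_eventually_nhdsGT_zero
    (eventually_scale_bounds (s := 1 / 2 - (3 * β - 1) / 15) hC0 (by linarith))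
  refine ⟨1 / (2 * C), ⟨by positivity, by rw [div_lt_one (by positivity)]; linarith⟩,
    ε₀, hε₀, fun ε hε ω₁ ω₂ Ω₁ Ω₂ hω₁l hω₁u hω₂l _ hΩ₁l hΩ₁u hΩ₂l hΩ₂u => ?_⟩
  obtain ⟨hL, hsemi, hfast⟩ := hsmall ε hε
  have hε0 : 0 < ε := hε.1
  set L := |log ε|
  have hε1 : ε ≤ 1 := (hε.2.trans hε₀.2).le
  have hL1 : 1 ≤ L := by nlinarith
  rw [show 1 / (2 * C) * ε / L = ε / (2 * C * L) by ring]
  refine ⟨(div_le_div_of_nonneg_left hε0.le hC0 (by nlinarith)).trans hΩ₁l,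
    (div_le_div_of_nonneg_left hε0.le (by positivity) (by nlinarith)).trans hΩ₂l,
    div_le_abs_sub_of_scale_separation hC hε0.le hL hΩ₁l hΩ₂u, fun k₁ k₂ l₁ l₂ hk hK hl => ?_⟩
  have hr : |(l₁ : ℝ) * Ω₁ + l₂ * Ω₂| ≤ 2 * (C * ε) := by
    exact_mod_cast abs_intCast_mul_add_intCast_mul_le hl hΩ₁u
      (hΩ₂u.trans (div_le_self (by positivity) hL1))
  rw [add_assoc]
  rcases eq_or_ne k₂ 0 with rfl | hk₂
  · have hk₁ : k₁ ≠ 0 := by rintro rfl; simp at hk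
    simpa using div_le_abs_intCast_mul_add hC0 hε0 hε1 (by linarith) hsemi hk₁ hω₁l
      (by linarith)
  · have hk₁ : |(k₁ : ℝ) * ω₁| ≤ C ^ 2 * ε ^ (1 / 2 - (3 * β - 1) / 15) := by
      refine abs_mul_le_of_le_cutoff hε0 hL1 (le_trans ?_ hK) hω₁u
      exact_mod_cast le_max_left |k₁| |k₂|
    exact div_le_abs_add_intCast_mul_add hC0 hε1 hL1 hk₂ hω₂l (by linarith)

theorem stmt7 (C : ℝ) (hC : 1 ≤ C) (β : ℝ) (hβ₁ : 4/9 < β) (hβ₂ : β < 1/2) :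
    ∃ a ∈ Set.Ioo (0:ℝ) 1, ∃ ε₀ ∈ Set.Ioo (0:ℝ) 1,
      ∀ ε ∈ Set.Ioo (0:ℝ) ε₀, ∀ ω₁ ω₂ Ω₁ Ω₂ : ℝ,
        Real.sqrt ε / (C * |Real.log ε|) ≤ |ω₁| →
        |ω₁| ≤ C * Real.sqrt ε / |Real.log ε| →
        1 / C ≤ |ω₂| → |ω₂| ≤ C →
        ε / C ≤ |Ω₁| → |Ω₁| ≤ C * ε →
        ε / (C * |Real.log ε|) ≤ |Ω₂| → |Ω₂| ≤ C * ε / |Real.log ε| →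
        a * ε / |Real.log ε| ≤ |Ω₁| ∧
        a * ε / |Real.log ε| ≤ |Ω₂| ∧
        a * ε / |Real.log ε| ≤ |Ω₁ - Ω₂| ∧
        ∀ k₁ k₂ l₁ l₂ : ℤ,
          0 < max |k₁| |k₂| →
          ((max |k₁| |k₂| : ℤ) : ℝ) ≤ C * ε ^ (-((3*β - 1)/15)) / |Real.log ε| ^ 3 →
          |l₁| + |l₂| ≤ 2 →
          a * ε / |Real.log ε| ≤
            |(k₁ : ℝ) * ω₁ + (k₂ : ℝ) * ω₂ + (l₁ : ℝ) * Ω₁ + (l₂ : ℝ) * Ω₂| :=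
  stmt7_general C hC β hβ₂
end

section
/- There exists a constant C > 0 such that for all φ ∈ [π/3, π], |1 + F(φ) − (7/24)·(φ − π)²| ≤ C·(φ − π)⁴, where F(φ) = (2/3)·(cos φ − (2 − 2·cos φ)^(−1/2)). -/
open Real

/-!
Write `φ = π - 2t` with `t ∈ [0, π/3]` and `c = cos t ≥ 1/2`. Then `2 - 2 cos φ = (2c)²`, so
the singular term of `F` is `1/(2c)`, and `1 + F φ = 7/3 (1 - c) - (1 - c)² (4c + 1)/(3c)`.
The quartic Taylor bound `|c - (1 - t²/2)| ≤ t⁴/24` makes the first term `7/6 t² = 7/24 (φ - π)²`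
up to `O(t⁴)`, and `0 ≤ 1 - c ≤ t²/2` makes the second term `O(t⁴)`.
-/

namespace Real

lemma cos_le_one_sub_sq_div_two_add_pow_four_div {x : ℝ} (hx₀ : 0 ≤ x) (hx₂ : x ≤ 2) :
    cos x ≤ 1 - x ^ 2 / 2 + x ^ 4 / 24 := by
  set s := x / 2
  have hx : x = 2 * s := by ring
  have hs₀ : 0 ≤ s - s ^ 3 / 6 := by
    have : 0 ≤ 6 - s ^ 2 := by nlinarith
    nlinarith [mul_nonneg (show 0 ≤ s by positivity) this]
  have hsin : s - s ^ 3 / 6 ≤ sin s := sin_ge_sub_cube (by positivity)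
  have hcos : cos x = 1 - 2 * sin s ^ 2 := by
    rw [hx, cos_two_mul, cos_sq']; ring
  rw [hcos, hx]
  nlinarith [mul_le_mul hsin hsin hs₀ (hs₀.trans hsin), pow_nonneg (sq_nonneg s) 3]

lemma abs_cos_sub_one_sub_sq_div_two_le {x : ℝ} (hx₀ : 0 ≤ x) (hx₂ : x ≤ 2) :
    |cos x - (1 - x ^ 2 / 2)| ≤ x ^ 4 / 24 := by
  rw [abs_le]
  constructor <;>
    linarith [one_sub_sq_div_two_le_cos (x := x),
      cos_le_one_sub_sq_div_two_add_pow_four_div hx₀ hx₂]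

lemma sq_rpow_neg_half {a : ℝ} (ha : 0 ≤ a) : (a ^ 2) ^ (-(1:ℝ) / 2) = a⁻¹ := by
  rw [← rpow_natCast_mul ha]; norm_num [rpow_neg_one]

end Real

lemma one_add_F_pi_sub_two_mul {t : ℝ} (ht : 0 < cos t) :
    1 + F (π - 2 * t) = 7 / 3 * (1 - cos t) - (1 - cos t) ^ 2 * (4 * cos t + 1) / (3 * cos t) := by
  have hcos : cos (π - 2 * t) = 1 - 2 * cos t ^ 2 := by
    rw [cos_pi_sub, cos_two_mul]; ring
  have hrpow : (2 - 2 * cos (π - 2 * t)) ^ (-(1:ℝ) / 2) = (2 * cos t)⁻¹ := by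
    rw [hcos, ← sq_rpow_neg_half (by positivity)]; ring_nf
  rw [F, hrpow, hcos]
  field_simp
  ring

theorem stmt11 :
    ∃ C : ℝ, 0 < C ∧ ∀ φ ∈ Set.Icc (π/3) π,
      |1 + F φ - (7/24) * (φ - π) ^ 2| ≤ C * (φ - π) ^ 4 := by
  refine ⟨1, one_pos, ?_⟩
  rintro φ ⟨hφ₁, hφ₂⟩
  set t := (π - φ) / 2
  have hφ : φ = π - 2 * t := by ring
  have ht₀ : 0 ≤ t := by linarith
  have ht₂ : t ≤ 2 := by linarith [pi_le_four]
  have hc : 1 / 2 ≤ cos t := by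
    rw [← cos_pi_div_three]
    exact cos_le_cos_of_nonneg_of_le_pi ht₀ (by linarith [pi_pos]) (by linarith)
  have htaylor := abs_le.mp (abs_cos_sub_one_sub_sq_div_two_le ht₀ ht₂)
  have hquad : 1 - cos t ≤ t ^ 2 / 2 := by linarith [one_sub_sq_div_two_le_cos (x := t)]
  -- `(4c + 1) / (3c) ≤ 2` for `c ≥ 1/2`
  have hrem : (1 - cos t) ^ 2 * (4 * cos t + 1) / (3 * cos t) ≤ t ^ 4 / 2 := by
    rw [div_le_iff₀ (by linarith)]
    nlinarith [mul_le_mul hquad hquad (by linarith [cos_le_one t]) (by positivity)]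
  have hrem₀ : 0 ≤ (1 - cos t) ^ 2 * (4 * cos t + 1) / (3 * cos t) :=
    div_nonneg (mul_nonneg (sq_nonneg _) (by linarith)) (by linarith)
  rw [hφ, one_add_F_pi_sub_two_mul (by linarith), abs_le]
  constructor <;> nlinarith [pow_nonneg ht₀ 4]
end

section
/- There exist constants c > 0 and C > 0 such that for every δ ≥ 0 and every φ ∈ [π/3, π], c·(δ + (φ − π)²) ≤ 1 + δ + F(φ) ≤ C·(δ + (φ − π)²), where F(φ) = (2/3)·(cos φ − (2 − 2·cos φ)^(−1/2)). -/
/-!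
Put `x = π - φ ∈ [0, 2π/3]`. The chord `s = √(2 - 2 cos φ)` equals `2 cos (x/2) ∈ [1, 2]`, and
`1 + F φ = (2 - s) · (s² + 2s - 1)/(3s)`. The second factor lies in `[2/3, 7/6]`, while
`2 - s = 2 (1 - cos (x/2))` lies in `[x²/π², x²/4]` by Jordan's inequality and `1 - cos y ≤ y²/2`.
Hence `2x²/(3π²) ≤ 1 + F φ ≤ 7x²/24`, and the constants `c = 1/15`, `C = 1` absorb `δ`.
-/

open Real

lemma rpow_neg_one_half_eq_inv_sqrt {t : ℝ} (ht : 0 ≤ t) : t ^ (-(1:ℝ)/2) = (√t)⁻¹ := by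
  rw [neg_div, rpow_neg ht, ← sqrt_eq_rpow]

lemma one_add_F_eq {φ s : ℝ} (hs : 0 < s) (hchord : √(2 - 2 * cos φ) = s) :
    1 + F φ = (2 - s) * ((s ^ 2 + 2 * s - 1) / (3 * s)) := by
  have hsq : 2 - 2 * cos φ = s ^ 2 := by
    rw [← hchord, sq_sqrt]
    nlinarith [cos_le_one φ]
  have hcos : cos φ = 1 - s ^ 2 / 2 := by linarith
  rw [F, rpow_neg_one_half_eq_inv_sqrt (hsq ▸ sq_nonneg s), hchord, hcos]
  field_simp
  ring

lemma sqrt_two_sub_two_mul_cos_pi_sub {x : ℝ} (h0 : -π ≤ x) (h1 : x ≤ π) :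
    √(2 - 2 * cos (π - x)) = 2 * cos (x / 2) := by
  have hnonneg : 0 ≤ cos (x / 2) := cos_nonneg_of_mem_Icc ⟨by linarith, by linarith⟩
  have hsq : 2 - 2 * cos (π - x) = (2 * cos (x / 2)) ^ 2 := by
    rw [cos_pi_sub, mul_pow, cos_sq (x / 2), mul_div_cancel₀ x two_ne_zero]
    ring
  rw [hsq, sqrt_sq (by positivity)]

lemma mem_Icc_chord_factor {s : ℝ} (h1 : 1 ≤ s) (h2 : s ≤ 2) :
    2 / 3 ≤ (s ^ 2 + 2 * s - 1) / (3 * s) ∧ (s ^ 2 + 2 * s - 1) / (3 * s) ≤ 7 / 6 := by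
  constructor
  · rw [le_div_iff₀ (by linarith)]
    nlinarith
  · rw [div_le_iff₀ (by linarith)]
    nlinarith

lemma mem_Icc_two_sub_two_mul_cos_half {x : ℝ} (hx : |x| ≤ 2 * π) :
    x ^ 2 / π ^ 2 ≤ 2 - 2 * cos (x / 2) ∧ 2 - 2 * cos (x / 2) ≤ x ^ 2 / 4 := by
  have hjordan := cos_le_one_sub_mul_cos_sq (x := x / 2) (by rw [abs_div, abs_two]; linarith)
  have htaylor := one_sub_sq_div_two_le_cos (x := x / 2)
  have hπ : π ^ 2 ≠ 0 := by positivity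
  constructor
  · calc x ^ 2 / π ^ 2 = 2 * (2 / π ^ 2 * (x / 2) ^ 2) := by field_simp
      _ ≤ 2 - 2 * cos (x / 2) := by linarith
  · linarith

lemma one_add_F_pi_sub_mem_Icc {x : ℝ} (h0 : 0 ≤ x) (h1 : x ≤ 2 * π / 3) :
    2 / (3 * π ^ 2) * x ^ 2 ≤ 1 + F (π - x) ∧ 1 + F (π - x) ≤ 7 / 24 * x ^ 2 := by
  set s := 2 * cos (x / 2) with hs
  have hs1 : 1 ≤ s := by
    have : cos (π / 3) ≤ cos (x / 2) :=
      cos_le_cos_of_nonneg_of_le_pi (by linarith) (by linarith [pi_pos]) (by linarith)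
    rw [cos_pi_div_three] at this
    linarith
  have hs2 : s ≤ 2 := by linarith [cos_le_one (x / 2)]
  have hF := one_add_F_eq (by linarith) (sqrt_two_sub_two_mul_cos_pi_sub
    (x := x) (by linarith [pi_pos]) (by linarith [pi_pos]))
  obtain ⟨hfac_lo, hfac_hi⟩ := mem_Icc_chord_factor hs1 hs2
  obtain ⟨hgap_lo, hgap_hi⟩ := mem_Icc_two_sub_two_mul_cos_half (x := x)
    (by rw [abs_of_nonneg h0]; linarith [pi_pos])
  rw [← hs] at hF hgap_lo hgap_hi
  rw [hF]
  constructor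
  · calc 2 / (3 * π ^ 2) * x ^ 2 = x ^ 2 / π ^ 2 * (2 / 3) := by field_simp
      _ ≤ (2 - s) * ((s ^ 2 + 2 * s - 1) / (3 * s)) :=
        mul_le_mul hgap_lo hfac_lo (by norm_num) (by linarith)
  · calc (2 - s) * ((s ^ 2 + 2 * s - 1) / (3 * s)) ≤ x ^ 2 / 4 * (7 / 6) :=
        mul_le_mul hgap_hi hfac_hi (by linarith) (by positivity)
      _ = 7 / 24 * x ^ 2 := by ring

theorem stmt12 :
    ∃ c : ℝ, 0 < c ∧ ∃ C : ℝ, 0 < C ∧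
      ∀ δ : ℝ, 0 ≤ δ → ∀ φ ∈ Set.Icc (π/3) π,
        c * (δ + (φ - π) ^ 2) ≤ 1 + δ + F φ ∧
        1 + δ + F φ ≤ C * (δ + (φ - π) ^ 2) := by
  refine ⟨1 / 15, by norm_num, 1, one_pos, fun δ hδ φ ⟨hφ_lo, hφ_hi⟩ => ?_⟩
  obtain ⟨hlo, hhi⟩ := one_add_F_pi_sub_mem_Icc (x := π - φ) (by linarith) (by linarith)
  rw [sub_sub_cancel] at hlo hhi
  have hsq : (φ - π) ^ 2 = (π - φ) ^ 2 := by ring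
  have hc : 1 / 15 ≤ 2 / (3 * π ^ 2) := by
    rw [div_le_div_iff₀ (by norm_num) (by positivity)]
    nlinarith [pi_lt_d2, pi_pos]
  have hx2 := sq_nonneg (π - φ)
  rw [hsq]
  constructor <;> nlinarith
end

section
/- With φ₀ = 2·arcsin((√2 − 1)/2), one has 2π − 2·φ₀ > (312/180)·π; that is, the amplitude of oscillation of the angular separation along any horseshoe orbit, which is at least 2π − 2·φ₀, exceeds 312 degrees. -/
/-! The claim reduces to `arcsin ((√2 - 1) / 2) < π / 15`, i.e. `(√2 - 1) / 2 < sin 12°`.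
Numerically `0.20711 < 0.20791`; the gap is wide enough for `sin x > x - x³/6`,
`3.14 < π < 3.15` and `√2 < 1.415`. -/

open Real

lemma sqrt_two_sub_one_div_two_lt_sin_pi_div_fifteen : (√2 - 1) / 2 < sin (π / 15) := by
  have hx : 0 < π / 15 := by positivity
  have hsin := sin_gt_sub_cube hx
  have hsq : (π / 15) ^ 2 < (3.15 / 15) ^ 2 := by gcongr; exact pi_lt_d2
  have hcube : (π / 15) ^ 3 / 6 < (π / 15) * ((3.15 / 15) ^ 2 / 6) := by
    rw [pow_succ', mul_div_assoc]; gcongr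
  have hsqrt : √2 < 1.415 := (sqrt_lt' (by norm_num)).2 (by norm_num)
  linarith [pi_gt_d2]

lemma arcsin_sqrt_two_sub_one_div_two_lt_pi_div_fifteen :
    arcsin ((√2 - 1) / 2) < π / 15 :=
  (arcsin_lt_iff_lt_sin' ⟨by linarith [pi_pos], by linarith [pi_pos]⟩).2
    sqrt_two_sub_one_div_two_lt_sin_pi_div_fifteen

theorem stmt15 :
    (312/180) * π < 2 * π - 2 * (2 * Real.arcsin ((Real.sqrt 2 - 1) / 2)) := by
  linarith [arcsin_sqrt_two_sub_one_div_two_lt_pi_div_fifteen]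
end
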